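/- Let A be a commutative ring, X = Spec A, and for open U ⊆ X let O(U) be the subring of ∏_{𝔭 ∈ U} A_𝔭 generated by the image ρ(A) of A together with the inverses ρ(a)⁻¹ for those a ∈ A with ρ(a) invertible. Then for a basic open set U = D(f), the subring O(D(f)) is isomorphic to the localization A_f, via the map sending a/fⁿ to ρ(a)ρ(f)⁻ⁿ. -/

import Mathlib

/-! The ring map `ρ` sends `f` to a unit of `O(D(f))`, so it factors through `A_f`, and both
the kernel and the units of `ρ` agree with those of `A → A_f`: `ρ a = 0` iff the annihilator of
`a` lies in no prime of `D(f)`, i.e. iff `f` lies in its radical, i.e. iff some `fⁿ a = 0`; and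
`ρ a` is a unit iff `D(f) ⊆ D(a)`, i.e. iff `a` becomes a unit in `A_f`. The first gives
injectivity of `A_f → O(D(f))`; the second shows that each generator `ρ(a)⁻¹` is the image of
`a⁻¹ ∈ A_f`, giving surjectivity. -/

variable {A : Type*} [CommRing A]

/-- The product of the canonical localization maps `A → ∏_{𝔭 ∈ D(f)} A_𝔭`. -/
noncomputable def rhoD (f : A) :
    A →+* ∀ 𝔭 : (PrimeSpectrum.basicOpen f : Set (PrimeSpectrum A)),
      Localization.AtPrime 𝔭.1.asIdeal :=
  Pi.ringHom fun 𝔭 => algebraMap A (Localization.AtPrime 𝔭.1.asIdeal)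

/-- The subring `O(D(f))` of `∏_{𝔭 ∈ D(f)} A_𝔭` generated by `ρ(A)` together with the
inverses `ρ(a)⁻¹` of those `ρ(a)` that are invertible. -/
noncomputable def ODf (f : A) :
    Subring (∀ 𝔭 : (PrimeSpectrum.basicOpen f : Set (PrimeSpectrum A)),
      Localization.AtPrime 𝔭.1.asIdeal) :=
  Subring.closure (Set.range (rhoD f) ∪
    {y | ∃ a : A, IsUnit (rhoD f a) ∧ y * rhoD f a = 1})

open PrimeSpectrum

noncomputable def rhoOn (U : Set (PrimeSpectrum A)) :
    A →+* ∀ 𝔭 : U, Localization.AtPrime 𝔭.1.asIdeal :=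
  RingHom.pi fun 𝔭 => algebraMap A (Localization.AtPrime 𝔭.1.asIdeal)

section rhoOn

variable {U : Set (PrimeSpectrum A)} {a : A}

theorem isUnit_rhoOn_iff : IsUnit (rhoOn U a) ↔ U ⊆ basicOpen a := by
  simp only [Pi.isUnit_iff, Subtype.forall, rhoOn, RingHom.pi_apply]
  exact forall₂_congr fun 𝔭 _ =>
    IsLocalization.AtPrime.isUnit_to_map_iff (Localization.AtPrime 𝔭.asIdeal) 𝔭.asIdeal a

theorem rhoOn_eq_zero_iff : rhoOn U a = 0 ↔ U ⊆ (zeroLocus (Ideal.torsionOf A A a))ᶜ := by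
  simp only [funext_iff, Subtype.forall, rhoOn, RingHom.pi_apply, Pi.zero_apply]
  refine forall₂_congr fun 𝔭 _ => ?_
  rw [IsLocalization.map_eq_zero_iff 𝔭.asIdeal.primeCompl, Set.mem_compl_iff, mem_zeroLocus,
    SetLike.coe_subset_coe, SetLike.not_le_iff_exists]
  simp [Ideal.mem_torsionOf_iff, Ideal.primeCompl, and_comm]

end rhoOn

theorem rhoD_eq_rhoOn (f : A) : rhoD f = rhoOn (basicOpen f : Set (PrimeSpectrum A)) := rfl

section Away

variable (f : A) {a : A} (S : Type*) [CommRing S] [Algebra A S] [IsLocalization.Away f S]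

theorem isUnit_rhoD_iff : IsUnit (rhoD f a) ↔ IsUnit (algebraMap A S a) := by
  rw [rhoD_eq_rhoOn]
  exact isUnit_rhoOn_iff.trans (basicOpen_le_basicOpen_iff_algebraMap_isUnit (S := S))

theorem rhoD_eq_zero_iff : rhoD f a = 0 ↔ algebraMap A S a = 0 := by
  rw [rhoD_eq_rhoOn, rhoOn_eq_zero_iff, basicOpen_eq_zeroLocus_compl,
    Set.compl_subset_compl, ← zeroLocus_span {f}, zeroLocus_subset_zeroLocus_iff,
    Ideal.span_singleton_le_iff_mem, Ideal.mem_radical_iff,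
    IsLocalization.map_eq_zero_iff (.powers f)]
  simp [Ideal.mem_torsionOf_iff, Submonoid.mem_powers_iff]

end Away

section ODf

variable (f : A)

theorem rhoD_mem_ODf (a : A) : rhoD f a ∈ ODf f :=
  Subring.subset_closure (Or.inl ⟨a, rfl⟩)

noncomputable def toODf : A →+* ODf f :=
  (rhoD f).codRestrict (ODf f) (rhoD_mem_ODf f)

theorem isUnit_toODf_self : IsUnit (toODf f f) := by
  have hf : IsUnit (rhoD f f) := (isUnit_rhoD_iff f (Localization.Away f)).2
    (IsLocalization.Away.algebraMap_isUnit f)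
  refine isUnit_iff_exists_inv.2 ⟨⟨↑hf.unit⁻¹, Subring.subset_closure
    (Or.inr ⟨f, hf, hf.val_inv_mul⟩)⟩, Subtype.ext hf.mul_val_inv⟩

noncomputable def awayToODf : Localization.Away f →+* ODf f :=
  IsLocalization.Away.lift f (isUnit_toODf_self f)

theorem coe_awayToODf_algebraMap (a : A) :
    (awayToODf f (algebraMap A _ a) : ∀ 𝔭 : (basicOpen f : Set (PrimeSpectrum A)),
      Localization.AtPrime 𝔭.1.asIdeal) = rhoD f a :=
  congrArg Subtype.val (IsLocalization.Away.lift_eq f (isUnit_toODf_self f) a)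

theorem awayToODf_injective : Function.Injective (awayToODf f) := by
  refine (IsLocalization.injective_iff_map_algebraMap_eq (.powers f) _).2 fun a b => ?_
  rw [← sub_eq_zero, ← map_sub, ← rhoD_eq_zero_iff f, map_sub, sub_eq_zero, Subtype.ext_iff,
    coe_awayToODf_algebraMap, coe_awayToODf_algebraMap]

theorem awayToODf_surjective : Function.Surjective (awayToODf f) := by
  set ψ := (ODf f).subtype.comp (awayToODf f)
  have hψ (a : A) : ψ (algebraMap A _ a) = rhoD f a := coe_awayToODf_algebraMap f a
  have hle : ODf f ≤ ψ.range := by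
    refine Subring.closure_le.2 ?_
    rintro y (⟨a, rfl⟩ | ⟨a, ha, hya⟩)
    · exact ⟨_, hψ a⟩
    · have hu := (isUnit_rhoD_iff f (Localization.Away f)).1 ha
      refine ⟨↑hu.unit⁻¹, (left_inv_eq_right_inv hya ?_).symm⟩
      rw [← hψ, ← map_mul, hu.mul_val_inv, map_one]
  rintro ⟨y, hy⟩
  obtain ⟨x, hx⟩ := hle hy
  exact ⟨x, Subtype.ext hx⟩

end ODf

/-- For a basic open `D(f)`, the subring `O(D(f))` is isomorphic to the localization
`A_f`, via the map sending (the class of) `a` to `ρ a` (hence `a/fⁿ` to `ρ(a)ρ(f)⁻ⁿ`). -/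
theorem ODf_iso_localization_away (f : A) :
    ∃ e : Localization.Away f ≃+* ODf f,
      ∀ a : A, ((e (algebraMap A (Localization.Away f) a)) : ∀ 𝔭 :
          (PrimeSpectrum.basicOpen f : Set (PrimeSpectrum A)),
          Localization.AtPrime 𝔭.1.asIdeal) = rhoD f a :=
  ⟨.ofBijective _ ⟨awayToODf_injective f, awayToODf_surjective f⟩,
    coe_awayToODf_algebraMap f⟩
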